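/- The multiplicative monoid M of polynomials f ∈ ℤ[s] with constant term f(0) = 1 is a free commutative monoid; in particular, its group completion is a free abelian group. -/

import Mathlib

/-!
`ℤ[s]` is a UFD, and a divisor of a polynomial with constant term `1` has a unit constant term,
so it is associated to exactly one polynomial with constant term `1`. Unique factorization in
`ℤ[s]` therefore becomes unique factorization in `M` into the irreducible polynomials with
constant term `1`, so `M ≃ ℕ^(ι)` with `ι` the set of those; its group completion is `ℤ^(ι)`.
-/
/-- The multiplicative monoid `M` of polynomials `f ∈ ℤ[s]` with constant
term `f(0) = 1`. -/
noncomputable def constTermOne : Submonoid (Polynomial ℤ) where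
  carrier := {f : Polynomial ℤ | f.coeff 0 = 1}
  one_mem' := by simp
  mul_mem' := by
    intro a b ha hb
    simp only [Set.mem_setOf_eq, Polynomial.mul_coeff_zero] at *
    rw [ha, hb, mul_one]

open UniqueFactorizationMonoid

namespace Submonoid

variable {R : Type*} [CommMonoidWithZero R] (S : Submonoid R)

structure IsDivisorClosedTransversal : Prop where
  zero_notMem : (0 : R) ∉ S
  exists_associated_of_dvd : ∀ s ∈ S, ∀ a, a ∣ s → ∃ b ∈ S, Associated a b
  eq_of_associated : ∀ a ∈ S, ∀ b ∈ S, Associated a b → a = b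

abbrev Irreducibles : Type _ := {p : S // Irreducible (p : R)}

def multisetProd : Multiplicative (Multiset S.Irreducibles) →* S where
  toFun m := (m.toAdd.map Subtype.val).prod
  map_one' := Multiset.prod_zero
  map_mul' x y := by simp only [toAdd_mul, Multiset.map_add, Multiset.prod_add]

theorem coe_multisetProd (m : Multiplicative (Multiset S.Irreducibles)) :
    (S.multisetProd m : R) = (m.toAdd.map fun p ↦ (p.1 : R)).prod := by
  change ((m.toAdd.map Subtype.val).prod : R) = _
  rw [coe_multiset_prod, Multiset.map_map]
  rfl

namespace IsDivisorClosedTransversal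

variable {S} (hS : S.IsDivisorClosedTransversal)
include hS

theorem exists_multisetProd_associated {s : R} (hs : s ∈ S) (m : Multiset R)
    (hm : ∀ p ∈ m, Irreducible p ∧ p ∣ s) : ∃ n, Associated (S.multisetProd n : R) m.prod := by
  induction m using Multiset.induction_on with
  | empty => exact ⟨1, by simp⟩
  | cons p m ih =>
    obtain ⟨n, hn⟩ := ih fun q hq ↦ hm q (Multiset.mem_cons_of_mem hq)
    obtain ⟨hp, hps⟩ := hm p (Multiset.mem_cons_self p m)
    obtain ⟨q, hqS, hpq⟩ := hS.exists_associated_of_dvd s hs p hps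
    refine ⟨.ofAdd {⟨⟨q, hqS⟩, hpq.irreducible hp⟩} * n, ?_⟩
    rw [map_mul, coe_mul, coe_multisetProd, toAdd_ofAdd, Multiset.map_singleton,
      Multiset.prod_singleton, Multiset.prod_cons]
    exact hpq.symm.mul_mul hn

variable [UniqueFactorizationMonoid R]

theorem multisetProd_injective : Function.Injective S.multisetProd := by
  intro m n h
  have hirr (m : Multiset S.Irreducibles) : ∀ x ∈ m.map fun p ↦ (p.1 : R), Irreducible x := by
    intro x hx
    obtain ⟨p, -, rfl⟩ := Multiset.mem_map.mp hx
    exact p.2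
  have hrel := factors_unique (hirr m.toAdd) (hirr n.toAdd)
    (by rw [← coe_multisetProd, ← coe_multisetProd, h])
  have hmap : m.toAdd.map (fun p ↦ (p.1 : R)) = n.toAdd.map (fun p ↦ (p.1 : R)) := by
    rw [← Multiset.rel_eq]
    refine hrel.mono fun x hx y hy hxy ↦ ?_
    obtain ⟨p, -, rfl⟩ := Multiset.mem_map.mp hx
    obtain ⟨q, -, rfl⟩ := Multiset.mem_map.mp hy
    exact hS.eq_of_associated _ p.1.2 _ q.1.2 hxy
  exact Multiset.map_injective (Subtype.val_injective.comp Subtype.val_injective) hmap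

theorem multisetProd_surjective : Function.Surjective S.multisetProd := by
  rintro ⟨s, hs⟩
  have hs0 : s ≠ 0 := fun h ↦ hS.zero_notMem (h ▸ hs)
  obtain ⟨n, hn⟩ := hS.exists_multisetProd_associated hs (factors s)
    fun p hp ↦ ⟨irreducible_of_factor p hp, dvd_of_mem_factors hp⟩
  exact ⟨n, Subtype.ext <| hS.eq_of_associated _ (S.multisetProd n).2 _ hs
    (hn.trans (factors_prod hs0))⟩

noncomputable def mulEquivFinsupp : S ≃* Multiplicative (S.Irreducibles →₀ ℕ) := by
  classical
  exact (MulEquiv.ofBijective _ ⟨hS.multisetProd_injective, hS.multisetProd_surjective⟩).symm.trans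
    (AddEquiv.toMultiplicative Multiset.toFinsupp)

end IsDivisorClosedTransversal

end Submonoid

namespace Polynomial

variable {R : Type*} [CommSemiring R]

theorem eq_of_associated_of_coeff_zero_eq_one [NoZeroDivisors R] {f g : R[X]}
    (hf : f.coeff 0 = 1) (hg : g.coeff 0 = 1) (h : Associated f g) : f = g := by
  obtain ⟨u, rfl⟩ := h
  obtain ⟨r, -, hr⟩ := isUnit_iff.mp u.isUnit
  rw [← hr, coeff_mul_C, hf, one_mul] at hg
  rw [← hr, hg, C_1, mul_one]

theorem exists_associated_coeff_zero_eq_one_of_dvd {f g : R[X]} (hf : f.coeff 0 = 1)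
    (h : g ∣ f) : ∃ g' : R[X], g'.coeff 0 = 1 ∧ Associated g g' := by
  obtain ⟨k, rfl⟩ := h
  obtain ⟨u, hu⟩ : IsUnit (g.coeff 0) := .of_mul_eq_one (k.coeff 0) (by rwa [← mul_coeff_zero])
  refine ⟨C (↑u⁻¹ : R) * g, by rw [coeff_C_mul, ← hu, Units.inv_mul], ?_⟩
  exact (associated_unit_mul_left g _ ((Units.isUnit u⁻¹).map C)).symm

end Polynomial

theorem constTermOne_isDivisorClosedTransversal :
    Submonoid.IsDivisorClosedTransversal constTermOne where
  zero_notMem h := by simp [constTermOne] at h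
  exists_associated_of_dvd _ hs _ h := Polynomial.exists_associated_coeff_zero_eq_one_of_dvd hs h
  eq_of_associated _ ha _ hb := Polynomial.eq_of_associated_of_coeff_zero_eq_one ha hb

noncomputable def Finsupp.natToIntLocalizationMap (ι : Type*) :
    (⊤ : Submonoid (Multiplicative (ι →₀ ℕ))).LocalizationMap (Multiplicative (ι →₀ ℤ)) where
  toMulHom := (AddMonoidHom.toMultiplicative
    (Finsupp.mapRange.addMonoidHom (Nat.castAddMonoidHom ℤ))).toMulHom
  isLocalizationMap := by
    refine Submonoid.isLocalizationMap_of_group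
      (Finsupp.mapRange_injective _ Nat.cast_zero Nat.cast_injective) fun z ↦ ?_
    refine ⟨.ofAdd (z.toAdd.mapRange Int.toNat rfl), .ofAdd ((-z.toAdd).mapRange Int.toNat rfl),
      trivial, ?_⟩
    ext i
    simp

theorem stmt_2 :
    (∃ ι : Type, Nonempty (constTermOne ≃* Multiplicative (ι →₀ ℕ))) ∧
    (∃ κ : Type, Nonempty
      (Localization (⊤ : Submonoid constTermOne) ≃* Multiplicative (κ →₀ ℤ))) := by
  let e := constTermOne_isDivisorClosedTransversal.mulEquivFinsupp
  exact ⟨⟨_, ⟨e⟩⟩, ⟨_, ⟨(Localization.monoidOf ⊤).mulEquivOfMulEquiv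
    (Finsupp.natToIntLocalizationMap _) (Submonoid.map_equiv_top e)⟩⟩⟩
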